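/- arXiv:1906.09163 — 2 statements merged into one kernel-verified Lean document; each statement's English description precedes it below -/
import Mathlib

section
/- If 𝔸 is an algebra in a Taylor variety and θ is a congruence of 𝔸, then the binary hypercommutator equals the binary term condition commutator: [θ,θ]_H = [θ,θ]_TC. -/
universe u v

structure Signature : Type 1 where
  ops : Type
  arity : ops → ℕ

class Alg (σ : Signature) (A : Type u) : Type u where
  interp : ∀ o : σ.ops, (Fin (σ.arity o) → A) → A

/-- A labeled `S`-dimensional cube with vertices labeled by elements of `A`. -/
abbrev Cube (S : Type v) (A : Type u) : Type (max u v) := (S → Bool) → A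

section Defs

variable {A : Type u} {B : Type u} {S : Type v}

def Quasireflexive (R : Set (B × B)) : Prop :=
  ∀ a b : B, (a, b) ∈ R → (a, a) ∈ R ∧ (b, b) ∈ R

def SymmRel (R : Set (B × B)) : Prop := ∀ a b : B, (a, b) ∈ R → (b, a) ∈ R

def TransRel (R : Set (B × B)) : Prop :=
  ∀ a b c : B, (a, b) ∈ R → (b, c) ∈ R → (a, c) ∈ R

def face [DecidableEq S] (i : S) (b : Bool) (γ : Cube S A) : Cube {x : S // x ≠ i} A :=
  fun f => γ fun j => if h : j = i then b else f ⟨j, h⟩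

def facesRel [DecidableEq S] (i : S) (R : Set (Cube S A)) :
    Set (Cube {x : S // x ≠ i} A × Cube {x : S // x ≠ i} A) :=
  {p | ∃ γ ∈ R, p = (face i false γ, face i true γ)}

def SRefl [DecidableEq S] (R : Set (Cube S A)) : Prop := ∀ i : S, Quasireflexive (facesRel i R)
def SSymm [DecidableEq S] (R : Set (Cube S A)) : Prop := ∀ i : S, SymmRel (facesRel i R)
def STrans [DecidableEq S] (R : Set (Cube S A)) : Prop := ∀ i : S, TransRel (facesRel i R)

def glue (i : S) (a b : Cube {x : S // x ≠ i} A) : Cube S A :=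
  fun f => if f i then b (fun j => f j.val) else a (fun j => f j.val)

def reflMap [DecidableEq S] (i : S) (b : Bool) (γ : Cube S A) : Cube S A :=
  glue i (face i b γ) (face i b γ)

def symMap [DecidableEq S] (i : S) (γ : Cube S A) : Cube S A :=
  glue i (face i true γ) (face i false γ)

def cut (Q : Set S) [DecidablePred (· ∈ Q)] (γ : Cube S A) :
    Cube {x : S // x ∈ Q} (Cube {x : S // x ∉ Q} A) :=
  fun f g => γ fun j => if h : j ∈ Q then f ⟨j, h⟩ else g ⟨j, h⟩

def cutProj (Q : Set S) [DecidablePred (· ∈ Q)] (R : Set (Cube S A))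
    (f : {x : S // x ∈ Q} → Bool) : Set (Cube {x : S // x ∉ Q} A) :=
  (fun γ => cut Q γ f) '' R

variable (σ : Signature)

def CompatCube [Alg σ A] (R : Set (Cube S A)) : Prop :=
  ∀ (o : σ.ops) (γ : Fin (σ.arity o) → Cube S A), (∀ k, γ k ∈ R) →
    (fun f => Alg.interp (A := A) o fun k => γ k f) ∈ R

def CompatRel [Alg σ A] (θ : Set (A × A)) : Prop :=
  ∀ (o : σ.ops) (x y : Fin (σ.arity o) → A), (∀ k, (x k, y k) ∈ θ) →
    (Alg.interp (A := A) o x, Alg.interp (A := A) o y) ∈ θ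

def IsCongruence [Alg σ A] (θ : Set (A × A)) : Prop :=
  (∀ a : A, (a, a) ∈ θ) ∧ SymmRel θ ∧ TransRel θ ∧ CompatRel σ θ

def IsTolerance [Alg σ A] [DecidableEq S] (R : Set (Cube S A)) : Prop :=
  CompatCube σ R ∧ SRefl R ∧ SSymm R

def IsHCongruence [Alg σ A] [DecidableEq S] (R : Set (Cube S A)) : Prop :=
  IsTolerance σ R ∧ STrans R

def subalgGen [Alg σ A] (X : Set (Cube S A)) : Set (Cube S A) :=
  ⋂₀ {R : Set (Cube S A) | CompatCube σ R ∧ X ⊆ R}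

def tolGen [Alg σ A] [DecidableEq S] (X : Set (Cube S A)) : Set (Cube S A) :=
  ⋂₀ {R : Set (Cube S A) | IsTolerance σ R ∧ X ⊆ R}

def congGen [Alg σ A] [DecidableEq S] (X : Set (Cube S A)) : Set (Cube S A) :=
  ⋂₀ {R : Set (Cube S A) | IsHCongruence σ R ∧ X ⊆ R}

def cubeAt (i : S) (p : A × A) : Cube S A := fun f => bif f i then p.2 else p.1

def cubeSet (i : S) (θ : Set (A × A)) : Set (Cube S A) := cubeAt i '' θ

def MRel [Alg σ A] [DecidableEq S] (θ : S → Set (A × A)) : Set (Cube S A) :=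
  tolGen σ (⋃ i : S, cubeSet i (θ i))

def DeltaRel [Alg σ A] [DecidableEq S] (θ : S → Set (A × A)) : Set (Cube S A) :=
  congGen σ (⋃ i : S, cubeSet i (θ i))

def rectRel [DecidableEq S] (θ : S → Set (A × A)) : Set (Cube S A) :=
  {γ | ∀ (i : S) (f : {x : S // x ≠ i} → Bool), (face i false γ f, face i true γ f) ∈ θ i}

def dirClosure [DecidableEq S] (i : S) (R : Set (Cube S A)) : Set (Cube S A) :=
  {γ | Relation.TransGen (fun a b : Cube {x : S // x ≠ i} A => (a, b) ∈ facesRel i R)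
      (face i false γ) (face i true γ)}

def Centrality [DecidableEq S] [Fintype S] (δ : Set (A × A)) (i : S)
    (R : Set (Cube S A)) : Prop :=
  ¬ ∃ γ ∈ R, Nat.card {f : {x : S // x ≠ i} → Bool //
      (face i false γ f, face i true γ f) ∈ δ} = 2 ^ (Fintype.card S - 1) - 1

end Defs

def finMod (n : ℕ) [NeZero n] (j : ℕ) : Fin n :=
  ⟨j % n, Nat.mod_lt _ (Nat.pos_of_ne_zero (NeZero.ne n))⟩

def tcSeq {A : Type u} {n : ℕ} [NeZero n] (Y : Set (Cube (Fin n) A)) :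
    ℕ → Set (Cube (Fin n) A)
  | 0 => dirClosure (finMod n 0) Y
  | j + 1 => dirClosure (finMod n (j + 1)) (tcSeq Y j)

def tcClosure {A : Type u} {n : ℕ} [NeZero n] (Y : Set (Cube (Fin n) A)) :
    Set (Cube (Fin n) A) := ⋃ j : ℕ, tcSeq Y j

def lastIdx (n : ℕ) [NeZero n] : Fin n :=
  ⟨n - 1, Nat.sub_lt (Nat.pos_of_ne_zero (NeZero.ne n)) Nat.one_pos⟩

def tcComm (σ : Signature) {A : Type u} [Alg σ A] (n : ℕ) [NeZero n]
    (θ : Fin n → Set (A × A)) : Set (A × A) :=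
  ⋂₀ {δ : Set (A × A) | IsCongruence σ δ ∧ Centrality δ (lastIdx n) (MRel σ θ)}

def hComm (σ : Signature) {A : Type u} [Alg σ A] (n : ℕ) [NeZero n]
    (θ : Fin n → Set (A × A)) : Set (A × A) :=
  ⋂₀ {δ : Set (A × A) | IsCongruence σ δ ∧ Centrality δ (lastIdx n) (DeltaRel σ θ)}

inductive Term (σ : Signature) (k : ℕ) : Type
  | var : Fin k → Term σ k
  | app : (o : σ.ops) → (Fin (σ.arity o) → Term σ k) → Term σ k

def Term.eval {σ : Signature} {k : ℕ} {A : Type u} [Alg σ A] :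
    Term σ k → (Fin k → A) → A
  | .var i, v => v i
  | .app o ts, v => Alg.interp (A := A) o fun j => (ts j).eval v

def IsTaylorAlg (σ : Signature) (A : Type u) [Alg σ A] : Prop :=
  ∃ (m : ℕ) (t : Term σ (m + 1)),
    (∀ a : A, t.eval (fun _ => a) = a) ∧
    ∀ e : Fin (m + 1), ∃ u v : Fin (m + 1) → Bool, u e = false ∧ v e = true ∧
      ∀ x y : A, t.eval (fun i => bif u i then y else x)
               = t.eval (fun i => bif v i then y else x)

open Classical in
noncomputable def comCube {A : Type u} (n : ℕ) (x y : A) : Cube (Fin n) A :=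
  fun f => if ∀ i, f i = true then y else x

def iSupported {A : Type u} {S : Type v} [DecidableEq S] (i : S) (γ : Cube S A)
    (x y : A) : Prop :=
  face i false γ (fun _ => true) = x ∧ face i true γ (fun _ => true) = y ∧
  ∀ f : {z : S // z ≠ i} → Bool, f ≠ (fun _ => true) →
    face i false γ f = face i true γ f

def sqCube {A : Type u} (a b c d : A) : Cube (Fin 2) A :=
  fun f => if f 0 then (if f 1 then d else c) else (if f 1 then b else a)

def lcs (σ : Signature) {A : Type u} [Alg σ A] (θ : Set (A × A)) : ℕ → Set (A × A)
  | 0 => θ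
  | n + 1 => tcComm σ 2 ![θ, lcs σ θ n]

def diagRel (A : Type u) : Set (A × A) := {p : A × A | p.1 = p.2}

/-!
`[θ,θ]_TC ⊆ [θ,θ]_H` because `M(θ,θ) ⊆ Δ(θ,θ)`. Conversely, let `δ` be a congruence for which
`M(θ,θ)` is central, and consider the 2-dimensional tolerances that contain the generators of
`M(θ,θ)`, consist of `θ`-squares and are `δ`-central. `M(θ,θ)` is one of them and unions of chains
stay in the family, so by Zorn's lemma there is a maximal one `R ⊇ M(θ,θ)`. Composing squares of
`R` in direction `0` trivially preserves centrality. Composing them in direction `1` preserves it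
too, and this is where the Taylor term is used: centrality yields the term condition, and the
Taylor identities let one replace the arguments of the term one coordinate at a time. By
maximality `R` is closed under both compositions, so it is a 2-dimensional congruence; hence
`Δ(θ,θ) ⊆ R` is `δ`-central.
-/

section Congruence

variable {σ : Signature} {A : Type u} [Alg σ A] {θ : Set (A × A)}

theorem IsCongruence.refl (hθ : IsCongruence σ θ) (a : A) : (a, a) ∈ θ := hθ.1 a

theorem IsCongruence.symm (hθ : IsCongruence σ θ) {a b : A} (h : (a, b) ∈ θ) : (b, a) ∈ θ :=
  hθ.2.1 a b h

theorem IsCongruence.trans (hθ : IsCongruence σ θ) {a b c : A} (hab : (a, b) ∈ θ)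
    (hbc : (b, c) ∈ θ) : (a, c) ∈ θ :=
  hθ.2.2.1 a b c hab hbc

theorem IsCongruence.compatRel (hθ : IsCongruence σ θ) : CompatRel σ θ := hθ.2.2.2

theorem IsCongruence.sInter {D : Set (Set (A × A))} (hD : ∀ δ ∈ D, IsCongruence σ δ) :
    IsCongruence σ (⋂₀ D) :=
  ⟨fun a δ hδ => (hD δ hδ).refl a,
   fun _ _ h δ hδ => (hD δ hδ).symm (h δ hδ),
   fun _ _ _ h₁ h₂ δ hδ => (hD δ hδ).trans (h₁ δ hδ) (h₂ δ hδ),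
   fun o _ _ h δ hδ => (hD δ hδ).compatRel o _ _ fun k => h k δ hδ⟩

theorem Term.eval_mem_of_compatRel (hθ : CompatRel σ θ) {k : ℕ} (t : Term σ k)
    {x y : Fin k → A} (h : ∀ i, (x i, y i) ∈ θ) : (t.eval x, t.eval y) ∈ θ := by
  induction t with
  | var i => exact h i
  | app o ts ih => exact hθ o _ _ ih

theorem Term.eval_update_mem (hθ : IsCongruence σ θ) {k : ℕ} (t : Term σ k) (s : Fin k → A)
    (E : Fin k) {a b : A} (h : (a, b) ∈ θ) :
    (t.eval (Function.update s E a), t.eval (Function.update s E b)) ∈ θ := by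
  refine t.eval_mem_of_compatRel hθ.compatRel fun i => ?_
  rcases eq_or_ne i E with rfl | hi
  · simpa using h
  · simpa [Function.update_of_ne hi] using hθ.refl (s i)

theorem Term.eval_mem_of_compatCube {S : Type v} {R : Set (Cube S A)} (hR : CompatCube σ R)
    {k : ℕ} (t : Term σ k) {γ : Fin k → Cube S A} (h : ∀ i, γ i ∈ R) :
    (fun f => t.eval fun i => γ i f) ∈ R := by
  induction t with
  | var i => exact h i
  | app o ts ih => exact hR o _ ih

end Congruence

theorem mem_of_forall_update {A : Type u} {ι : Type v} [Fintype ι] [DecidableEq ι]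
    {δ : Set (A × A)} (hrefl : ∀ a, (a, a) ∈ δ) (htrans : TransRel δ) (F : (ι → A) → A)
    {x z : A} (h : ∀ (E : ι) (w : ι → A), (∀ i, w i = x ∨ w i = z) →
      (F (Function.update w E x), F (Function.update w E z)) ∈ δ) :
    (F fun _ => x, F fun _ => z) ∈ δ := by
  suffices ∀ s : Finset ι, (F fun _ => x, F fun i => if i ∈ s then z else x) ∈ δ by
    simpa using this Finset.univ
  intro s
  induction s using Finset.induction_on with
  | empty => simpa using hrefl _
  | insert E s hE ih =>
    have hstep := h E (fun i => if i ∈ s then z else x) fun i => by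
      by_cases hi : i ∈ s <;> simp [hi]
    have hx : Function.update (fun i => if i ∈ s then z else x) E x =
        fun i => if i ∈ s then z else x := by
      simp [hE]
    have hz : Function.update (fun i => if i ∈ s then z else x) E z =
        fun i => if i ∈ insert E s then z else x := by
      ext i
      by_cases hi : i = E <;> simp [hi, Function.update]
    rw [hx, hz] at hstep
    exact htrans _ _ _ ih hstep

section Cubes

variable {A : Type u} {S : Type v} [DecidableEq S]

theorem face_glue (i : S) (C D : Cube {x : S // x ≠ i} A) (b : Bool) :
    face i b (glue i C D) = bif b then D else C := by
  funext g
  have hg : (fun l : {x : S // x ≠ i} => if h : l.val = i then b else g ⟨l.val, h⟩) = g :=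
    funext fun l => dif_neg l.2
  cases b <;> simp only [face, glue, dite_true, hg] <;> rfl

theorem glue_face (i : S) (γ : Cube S A) : glue i (face i false γ) (face i true γ) = γ := by
  funext f
  have hf : ∀ b, f i = b → (fun j => if h : j = i then b else f j) = f := fun b hb =>
    funext fun j => by by_cases h : j = i <;> simp [h, hb]
  cases hb : f i <;> simp only [glue, face, hb, hf _ hb] <;> rfl

theorem mem_facesRel_iff {i : S} {R : Set (Cube S A)} {C D : Cube {x : S // x ≠ i} A} :
    (C, D) ∈ facesRel i R ↔ glue i C D ∈ R := by
  constructor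
  · rintro ⟨γ, hγ, h⟩
    simp only [Prod.mk.injEq] at h
    rwa [h.1, h.2, glue_face]
  · intro h
    exact ⟨_, h, by simp [face_glue]⟩

theorem Centrality.mono [Fintype S] {δ : Set (A × A)} {i : S} {R R' : Set (Cube S A)}
    (hRR' : R ⊆ R') (h : Centrality δ i R') : Centrality δ i R :=
  fun ⟨γ, hγ, hcard⟩ => h ⟨γ, hRR' hγ, hcard⟩

variable (σ : Signature) [Alg σ A]

theorem isTolerance_tolGen (X : Set (Cube S A)) : IsTolerance σ (tolGen σ X) := by
  refine ⟨fun o γ h R hR => hR.1.1 o γ fun k => h k R hR, fun i C D hCD => ?_,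
    fun i C D hCD => ?_⟩ <;> simp only [mem_facesRel_iff] at hCD ⊢
  · have h := fun R (hR : R ∈ {R | IsTolerance σ R ∧ X ⊆ R}) =>
      hR.1.2.1 i C D (mem_facesRel_iff.2 (hCD R hR))
    exact ⟨fun R hR => mem_facesRel_iff.1 (h R hR).1, fun R hR => mem_facesRel_iff.1 (h R hR).2⟩
  · exact fun R hR => mem_facesRel_iff.1 (hR.1.2.2 i C D (mem_facesRel_iff.2 (hCD R hR)))

theorem subset_tolGen (X : Set (Cube S A)) : X ⊆ tolGen σ X :=
  Set.subset_sInter fun _ hR => hR.2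

theorem tolGen_subset {X R : Set (Cube S A)} (hR : IsTolerance σ R) (hXR : X ⊆ R) :
    tolGen σ X ⊆ R :=
  Set.sInter_subset_of_mem ⟨hR, hXR⟩

theorem congGen_subset {X R : Set (Cube S A)} (hR : IsHCongruence σ R) (hXR : X ⊆ R) :
    congGen σ X ⊆ R :=
  Set.sInter_subset_of_mem ⟨hR, hXR⟩

theorem MRel_subset_DeltaRel (θ : S → Set (A × A)) : MRel σ θ ⊆ DeltaRel σ θ :=
  Set.sInter_subset_sInter fun _ hR => ⟨hR.1.1, hR.2⟩

end Cubes

section Squares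

variable {A : Type u}

instance (i : Fin 2) : Unique {j : Fin 2 // j ≠ i} := (finSuccAboveEquiv i).symm.unique

theorem forall_fun_unique_bool {ι : Type v} [Unique ι] {p : (ι → Bool) → Prop} :
    (∀ g, p g) ↔ p (fun _ => false) ∧ p (fun _ => true) := by
  refine ⟨fun h => ⟨h _, h _⟩, fun ⟨h₀, h₁⟩ g => ?_⟩
  rw [show g = fun _ => g default from funext fun j => by rw [Unique.eq_default j]]
  cases g default <;> assumption

theorem card_subtype_fun_unique_bool_eq_one {ι : Type v} [Unique ι] (p : (ι → Bool) → Prop) :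
    Nat.card {f // p f} = 1 ↔ ¬(p (fun _ => false) ↔ p (fun _ => true)) := by
  rw [Nat.card_congr ((Equiv.funUnique ι Bool).subtypeEquiv (q := fun x => p fun _ => x)
    fun f => by rw [show f = fun _ => f default from funext fun j => by rw [Unique.eq_default j]]
                rfl), Nat.card_eq_one_iff_exists]
  simp only [Subtype.exists, Subtype.forall, Subtype.mk.injEq, Bool.exists_bool, Bool.forall_bool,
    Bool.true_eq_false, Bool.false_eq_true, imp_false, imp_true_iff, and_true, true_and]
  tauto

theorem glue_zero_eq_sqCube (C D : Cube {j : Fin 2 // j ≠ 0} A) :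
    glue 0 C D = sqCube (C fun _ => false) (C fun _ => true) (D fun _ => false)
      (D fun _ => true) := by
  funext f
  have h : (fun j : {j : Fin 2 // j ≠ 0} => f j.val) = fun _ => f 1 :=
    funext fun j => by rw [show j.val = 1 by omega]
  cases h0 : f 0 <;> cases h1 : f 1 <;> simp [glue, sqCube, h, h0, h1]

theorem glue_one_eq_sqCube (C D : Cube {j : Fin 2 // j ≠ 1} A) :
    glue 1 C D = sqCube (C fun _ => false) (D fun _ => false) (C fun _ => true)
      (D fun _ => true) := by
  funext f
  have h : (fun j : {j : Fin 2 // j ≠ 1} => f j.val) = fun _ => f 0 :=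
    funext fun j => by rw [show j.val = 0 by omega]
  cases h0 : f 0 <;> cases h1 : f 1 <;> simp [glue, sqCube, h, h0, h1]

theorem exists_eq_sqCube (γ : Cube (Fin 2) A) : ∃ a b c d, γ = sqCube a b c d :=
  ⟨_, _, _, _, by rw [← glue_one_eq_sqCube, glue_face]⟩

theorem sqCube_inj {a b c d a' b' c' d' : A} :
    sqCube a b c d = sqCube a' b' c' d' ↔ a = a' ∧ b = b' ∧ c = c' ∧ d = d' := by
  refine ⟨fun h => ⟨?_, ?_, ?_, ?_⟩, by rintro ⟨rfl, rfl, rfl, rfl⟩; rfl⟩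
  · simpa [sqCube] using congrFun h ![false, false]
  · simpa [sqCube] using congrFun h ![false, true]
  · simpa [sqCube] using congrFun h ![true, false]
  · simpa [sqCube] using congrFun h ![true, true]

theorem cubeAt_zero (x y : A) : cubeAt (0 : Fin 2) (x, y) = sqCube x x y y := by
  funext f
  cases h0 : f 0 <;> cases h1 : f 1 <;> simp [cubeAt, sqCube, h0, h1]

theorem cubeAt_one (x y : A) : cubeAt (1 : Fin 2) (x, y) = sqCube x y x y := by
  funext f
  cases h0 : f 0 <;> cases h1 : f 1 <;> simp [cubeAt, sqCube, h0, h1]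

theorem comp_sqCube {ι : Type v} (F : (ι → A) → A) (a b c d : ι → A) :
    (fun f => F fun k => sqCube (a k) (b k) (c k) (d k) f) = sqCube (F a) (F b) (F c) (F d) := by
  funext f
  unfold sqCube
  split_ifs <;> rfl

variable {R : Set (Cube (Fin 2) A)}

theorem mem_facesRel_zero {C D : Cube {j : Fin 2 // j ≠ 0} A} :
    (C, D) ∈ facesRel 0 R ↔
      sqCube (C fun _ => false) (C fun _ => true) (D fun _ => false) (D fun _ => true) ∈ R := by
  rw [mem_facesRel_iff, glue_zero_eq_sqCube]

theorem mem_facesRel_one {C D : Cube {j : Fin 2 // j ≠ 1} A} :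
    (C, D) ∈ facesRel 1 R ↔
      sqCube (C fun _ => false) (D fun _ => false) (C fun _ => true) (D fun _ => true) ∈ R := by
  rw [mem_facesRel_iff, glue_one_eq_sqCube]

theorem sRefl_iff_sqCube : SRefl R ↔ ∀ a b c d, sqCube a b c d ∈ R →
    (sqCube a a c c ∈ R ∧ sqCube b b d d ∈ R) ∧ (sqCube a b a b ∈ R ∧ sqCube c d c d ∈ R) := by
  refine ⟨fun h a b c d hR => ⟨?_, ?_⟩, fun h => Fin.forall_fin_two.2 ⟨fun C D hCD => ?_,
    fun C D hCD => ?_⟩⟩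
  · simpa [mem_facesRel_one, face, sqCube] using h 1 _ _ ⟨_, hR, rfl⟩
  · simpa [mem_facesRel_zero, face, sqCube] using h 0 _ _ ⟨_, hR, rfl⟩
  · rw [mem_facesRel_zero] at hCD; simp only [mem_facesRel_zero]; exact (h _ _ _ _ hCD).2
  · rw [mem_facesRel_one] at hCD; simp only [mem_facesRel_one]; exact (h _ _ _ _ hCD).1

theorem sSymm_iff_sqCube : SSymm R ↔
    ∀ a b c d, sqCube a b c d ∈ R → sqCube b a d c ∈ R ∧ sqCube c d a b ∈ R := by
  refine ⟨fun h a b c d hR => ⟨?_, ?_⟩, fun h => Fin.forall_fin_two.2 ⟨fun C D hCD => ?_,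
    fun C D hCD => ?_⟩⟩
  · simpa [mem_facesRel_one, face, sqCube] using h 1 _ _ ⟨_, hR, rfl⟩
  · simpa [mem_facesRel_zero, face, sqCube] using h 0 _ _ ⟨_, hR, rfl⟩
  · rw [mem_facesRel_zero] at hCD ⊢; exact (h _ _ _ _ hCD).2
  · rw [mem_facesRel_one] at hCD ⊢; exact (h _ _ _ _ hCD).1

theorem sTrans_of_sqCube
    (hzero : ∀ a b c d e f, sqCube a b c d ∈ R → sqCube c d e f ∈ R → sqCube a b e f ∈ R)
    (hone : ∀ a b c d e f, sqCube a b c d ∈ R → sqCube b e d f ∈ R → sqCube a e c f ∈ R) :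
    STrans R := by
  refine Fin.forall_fin_two.2 ⟨fun B C D hBC hCD => ?_, fun B C D hBC hCD => ?_⟩
  · rw [mem_facesRel_zero] at hBC hCD ⊢; exact hzero _ _ _ _ _ _ hBC hCD
  · rw [mem_facesRel_one] at hBC hCD ⊢; exact hone _ _ _ _ _ _ hBC hCD

theorem iUnion_cubeSet_subset_iff {θ : Set (A × A)} : (⋃ i : Fin 2, cubeSet i θ) ⊆ R ↔
    ∀ x y, (x, y) ∈ θ → sqCube x x y y ∈ R ∧ sqCube x y x y ∈ R := by
  simp only [Set.iUnion_subset_iff, Fin.forall_fin_two, cubeSet, Set.image_subset_iff]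
  simp only [Set.subset_def, Set.mem_preimage, Prod.forall, cubeAt_zero, cubeAt_one]
  exact ⟨fun h x y hxy => ⟨h.1 x y hxy, h.2 x y hxy⟩, fun h => ⟨fun x y hxy => (h x y hxy).1,
    fun x y hxy => (h x y hxy).2⟩⟩

theorem sqCube_mem_rectRel {θ : Set (A × A)} {a b c d : A} :
    sqCube a b c d ∈ rectRel (fun _ : Fin 2 => θ) ↔
      ((a, c) ∈ θ ∧ (b, d) ∈ θ) ∧ ((a, b) ∈ θ ∧ (c, d) ∈ θ) := by
  simp only [rectRel, Fin.forall_fin_two, forall_fun_unique_bool]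
  simp [face, sqCube]

theorem centrality_two_iff {δ : Set (A × A)} : Centrality δ (lastIdx 2) R ↔
    ∀ a b c d, sqCube a b c d ∈ R → ((a, b) ∈ δ ↔ (c, d) ∈ δ) := by
  simp only [Centrality, show 2 ^ (Fintype.card (Fin 2) - 1) - 1 = 1 from rfl,
    card_subtype_fun_unique_bool_eq_one, not_exists, not_and, not_not]
  refine ⟨fun h a b c d hR => ?_, fun h γ hγ => ?_⟩
  · simpa [face, sqCube, lastIdx] using h _ hR
  · obtain ⟨a, b, c, d, rfl⟩ := exists_eq_sqCube γ
    simpa [face, sqCube, lastIdx] using h a b c d hγ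

variable {σ : Signature} [Alg σ A]

theorem CompatCube.sqCube_mem (hR : CompatCube σ R) (o : σ.ops)
    {a b c d : Fin (σ.arity o) → A} (h : ∀ k, sqCube (a k) (b k) (c k) (d k) ∈ R) :
    sqCube (Alg.interp o a) (Alg.interp o b) (Alg.interp o c) (Alg.interp o d) ∈ R := by
  rw [← comp_sqCube]
  exact hR o _ h

theorem compatCube_of_sqCube (h : ∀ (o : σ.ops) (a b c d : Fin (σ.arity o) → A),
    (∀ k, sqCube (a k) (b k) (c k) (d k) ∈ R) →
      sqCube (Alg.interp o a) (Alg.interp o b) (Alg.interp o c) (Alg.interp o d) ∈ R) :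
    CompatCube σ R := by
  intro o γ hγ
  choose a b c d hγabcd using fun k => exists_eq_sqCube (γ k)
  obtain rfl : γ = fun k => sqCube (a k) (b k) (c k) (d k) := funext hγabcd
  rw [comp_sqCube]
  exact h o a b c d hγ

theorem Term.eval_sqCube_mem (hR : CompatCube σ R) {k : ℕ} (t : Term σ k)
    {a b c d : Fin k → A} (h : ∀ i, sqCube (a i) (b i) (c i) (d i) ∈ R) :
    sqCube (t.eval a) (t.eval b) (t.eval c) (t.eval d) ∈ R := by
  rw [← comp_sqCube]
  exact t.eval_mem_of_compatCube hR h

end Squares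

section Composition

variable {A : Type u}

def compZero (R : Set (Cube (Fin 2) A)) : Set (Cube (Fin 2) A) :=
  {γ | ∃ a b c d e f, sqCube a b c d ∈ R ∧ sqCube c d e f ∈ R ∧ γ = sqCube a b e f}

def compOne (R : Set (Cube (Fin 2) A)) : Set (Cube (Fin 2) A) :=
  {γ | ∃ a b c d e f, sqCube a b c d ∈ R ∧ sqCube b e d f ∈ R ∧ γ = sqCube a e c f}

variable {R : Set (Cube (Fin 2) A)}

theorem sqCube_mem_compZero {a b e f : A} :
    sqCube a b e f ∈ compZero R ↔ ∃ c d, sqCube a b c d ∈ R ∧ sqCube c d e f ∈ R := by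
  refine ⟨fun ⟨_, _, c, d, _, _, h₁, h₂, h⟩ => ?_,
    fun ⟨c, d, h₁, h₂⟩ => ⟨_, _, _, _, _, _, h₁, h₂, rfl⟩⟩
  obtain ⟨rfl, rfl, rfl, rfl⟩ := sqCube_inj.1 h
  exact ⟨c, d, h₁, h₂⟩

theorem sqCube_mem_compOne {a c e f : A} :
    sqCube a e c f ∈ compOne R ↔ ∃ b d, sqCube a b c d ∈ R ∧ sqCube b e d f ∈ R := by
  refine ⟨fun ⟨_, b, _, d, _, _, h₁, h₂, h⟩ => ?_,
    fun ⟨b, d, h₁, h₂⟩ => ⟨_, _, _, _, _, _, h₁, h₂, rfl⟩⟩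
  obtain ⟨rfl, rfl, rfl, rfl⟩ := sqCube_inj.1 h
  exact ⟨b, d, h₁, h₂⟩

end Composition

/-- A 2-dimensional tolerance between the generators of `M(θ,θ)` and the `θ`-squares, for which
`δ` is central, stated through the corners of `sqCube a b c d`: its faces in direction `0` are the
rows `(a, b)`, `(c, d)`, those in direction `1` the columns `(a, c)`, `(b, d)`. -/
structure IsCentralTolerance (σ : Signature) {A : Type u} [Alg σ A] (θ δ : Set (A × A))
    (R : Set (Cube (Fin 2) A)) : Prop where
  compat : CompatCube σ R
  refl_zero : ∀ {a b c d}, sqCube a b c d ∈ R → sqCube a b a b ∈ R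
  refl_one : ∀ {a b c d}, sqCube a b c d ∈ R → sqCube a a c c ∈ R
  symm_zero : ∀ {a b c d}, sqCube a b c d ∈ R → sqCube c d a b ∈ R
  symm_one : ∀ {a b c d}, sqCube a b c d ∈ R → sqCube b a d c ∈ R
  gen_zero : ∀ {x y}, (x, y) ∈ θ → sqCube x x y y ∈ R
  gen_one : ∀ {x y}, (x, y) ∈ θ → sqCube x y x y ∈ R
  edge_mem : ∀ {a b c d}, sqCube a b c d ∈ R → (a, b) ∈ θ ∧ (a, c) ∈ θ
  central : ∀ {a b c d}, sqCube a b c d ∈ R → ((a, b) ∈ δ ↔ (c, d) ∈ δ)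

namespace IsCentralTolerance

variable {σ : Signature} {A : Type u} [Alg σ A] {θ δ : Set (A × A)} {R : Set (Cube (Fin 2) A)}

open Function

theorem bottom_edge_mem (hR : IsCentralTolerance σ θ δ R) {a b c d : A}
    (h : sqCube a b c d ∈ R) : (c, d) ∈ θ :=
  (hR.edge_mem (hR.symm_zero h)).1

theorem term_condition (hR : IsCentralTolerance σ θ δ R) {k : ℕ} (t : Term σ k) (E : Fin k)
    {s w : Fin k → A} (hsw : ∀ i ≠ E, (s i, w i) ∈ θ) {x y : A} (hxy : (x, y) ∈ θ) :
    (t.eval (update s E x), t.eval (update s E y)) ∈ δ ↔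
      (t.eval (update w E x), t.eval (update w E y)) ∈ δ := by
  refine hR.central (t.eval_sqCube_mem hR.compat fun i => ?_)
  rcases eq_or_ne i E with rfl | hi
  · simpa using hR.gen_one hxy
  · simpa [update_of_ne hi] using hR.gen_zero (hsw i hi)

/-- Apply `t` to `sqCube z₁ y₁ z₂ y₂` in coordinate `E` and to `sqCube x₁ y₁ x₂ y₂`, with columns
chosen by `u` and `v`, elsewhere. By the Taylor identity the right column of the resulting square
consists of `u`-patterns, so centrality carries `x₁ δ z₁` from the top row to the bottom row. -/
theorem taylor_step (hR : IsCentralTolerance σ θ δ R) (hδ : IsCongruence σ δ) {k : ℕ}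
    (t : Term σ k) {E : Fin k} {u v : Fin k → Bool} (huE : u E = false) (hvE : v E = true)
    (huv : ∀ x y : A, t.eval (fun i => bif u i then y else x) =
      t.eval (fun i => bif v i then y else x))
    {x₁ x₂ y₁ y₂ z₁ z₂ : A} (hx : sqCube x₁ y₁ x₂ y₂ ∈ R) (hz : sqCube z₁ y₁ z₂ y₂ ∈ R)
    (h₁ : (x₁, z₁) ∈ δ) :
    (t.eval (update (fun i => bif u i then y₂ else x₂) E z₂),
      t.eval (fun i => bif u i then y₂ else x₂)) ∈ δ := by
  have hsq := t.eval_sqCube_mem hR.compat (a := update (fun i => bif u i then y₁ else x₁) E z₁)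
    (b := fun i => bif v i then y₁ else x₁) (c := update (fun i => bif u i then y₂ else x₂) E z₂)
    (d := fun i => bif v i then y₂ else x₂) fun i => by
      rcases eq_or_ne i E with rfl | hi
      · simpa [hvE] using hz
      · simp only [update_of_ne hi]
        cases u i <;> cases v i
        · exact hR.refl_one hx
        · exact hx
        · exact hR.symm_one hx
        · exact hR.refl_one (hR.symm_one hx)
  have hu : ∀ p q : A, update (fun i => bif u i then q else p) E p =
      fun i => bif u i then q else p :=
    fun p q => by simp [huE]
  have htop := t.eval_update_mem hδ (fun i => bif u i then y₁ else x₁) E (hδ.symm h₁)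
  rw [hu, huv] at htop
  have hbottom := (hR.central hsq).1 htop
  rwa [← huv] at hbottom

/-- Along each coordinate `E` of the Taylor term, `taylor_step` and the term condition give
`t(w[E ↦ z₂]) δ t(w[E ↦ x₂])`; changing the coordinates one at a time and using idempotence
gives `z₂ δ x₂`. -/
theorem mem_of_shared_column (hR : IsCentralTolerance σ θ δ R) (hT : IsTaylorAlg σ A)
    (hθ : IsCongruence σ θ) (hδ : IsCongruence σ δ) {x₁ x₂ y₁ y₂ z₁ z₂ : A}
    (hx : sqCube x₁ y₁ x₂ y₂ ∈ R) (hz : sqCube z₁ y₁ z₂ y₂ ∈ R) (h₁ : (x₁, z₁) ∈ δ) :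
    (x₂, z₂) ∈ δ := by
  obtain ⟨m, t, hidem, htaylor⟩ := hT
  have hxy : (x₂, y₂) ∈ θ := hR.bottom_edge_mem hx
  have hzx : (z₂, x₂) ∈ θ := hθ.trans (hR.bottom_edge_mem hz) (hθ.symm hxy)
  have hwalk := mem_of_forall_update hδ.refl (fun _ _ _ => hδ.trans) t.eval (x := z₂) (z := x₂)
    fun E w hw => by
      obtain ⟨u, v, huE, hvE, huv⟩ := htaylor E
      have hsw : ∀ i ≠ E, ((fun i => bif u i then y₂ else x₂) i, w i) ∈ θ := fun i _ => by
        have hs : (bif u i then y₂ else x₂, x₂) ∈ θ := by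
          cases u i
          · exact hθ.refl _
          · exact hθ.symm hxy
        rcases hw i with h | h <;> rw [h]
        · exact hθ.trans hs (hθ.symm hzx)
        · exact hs
      refine (hR.term_condition t E hsw hzx).1 ?_
      rw [show update (fun i => bif u i then y₂ else x₂) E x₂ = fun i => bif u i then y₂ else x₂
        by simp [huE]]
      exact hR.taylor_step hδ t huE hvE huv hx hz h₁
  simpa [hidem] using hδ.symm hwalk

theorem subset_compZero (hR : IsCentralTolerance σ θ δ R) : R ⊆ compZero R := fun γ hγ => by
  obtain ⟨a, b, c, d, rfl⟩ := exists_eq_sqCube γ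
  exact sqCube_mem_compZero.2 ⟨a, b, hR.refl_zero hγ, hγ⟩

theorem subset_compOne (hR : IsCentralTolerance σ θ δ R) : R ⊆ compOne R := fun γ hγ => by
  obtain ⟨a, b, c, d, rfl⟩ := exists_eq_sqCube γ
  exact sqCube_mem_compOne.2 ⟨a, c, hR.refl_one hγ, hγ⟩

theorem compZero (hR : IsCentralTolerance σ θ δ R) (hθ : IsCongruence σ θ) :
    IsCentralTolerance σ θ δ (compZero R) where
  compat := compatCube_of_sqCube fun o a b e f h => by
    simp only [sqCube_mem_compZero] at h ⊢
    choose c d h₁ h₂ using h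
    exact ⟨_, _, hR.compat.sqCube_mem o h₁, hR.compat.sqCube_mem o h₂⟩
  refl_zero h := by
    obtain ⟨c, d, h₁, -⟩ := sqCube_mem_compZero.1 h
    exact sqCube_mem_compZero.2 ⟨_, _, hR.refl_zero h₁, hR.refl_zero h₁⟩
  refl_one h := by
    obtain ⟨c, d, h₁, h₂⟩ := sqCube_mem_compZero.1 h
    exact sqCube_mem_compZero.2 ⟨_, _, hR.refl_one h₁, hR.refl_one h₂⟩
  symm_zero h := by
    obtain ⟨c, d, h₁, h₂⟩ := sqCube_mem_compZero.1 h
    exact sqCube_mem_compZero.2 ⟨_, _, hR.symm_zero h₂, hR.symm_zero h₁⟩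
  symm_one h := by
    obtain ⟨c, d, h₁, h₂⟩ := sqCube_mem_compZero.1 h
    exact sqCube_mem_compZero.2 ⟨_, _, hR.symm_one h₁, hR.symm_one h₂⟩
  gen_zero hxy := sqCube_mem_compZero.2 ⟨_, _, hR.gen_zero hxy, hR.gen_zero (hθ.refl _)⟩
  gen_one hxy := sqCube_mem_compZero.2 ⟨_, _, hR.gen_one hxy, hR.gen_one hxy⟩
  edge_mem h := by
    obtain ⟨c, d, h₁, h₂⟩ := sqCube_mem_compZero.1 h
    exact ⟨(hR.edge_mem h₁).1, hθ.trans (hR.edge_mem h₁).2 (hR.edge_mem h₂).2⟩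
  central h := by
    obtain ⟨c, d, h₁, h₂⟩ := sqCube_mem_compZero.1 h
    exact (hR.central h₁).trans (hR.central h₂)

theorem compOne (hR : IsCentralTolerance σ θ δ R) (hT : IsTaylorAlg σ A)
    (hθ : IsCongruence σ θ) (hδ : IsCongruence σ δ) : IsCentralTolerance σ θ δ (compOne R) where
  compat := compatCube_of_sqCube fun o a e c f h => by
    simp only [sqCube_mem_compOne] at h ⊢
    choose b d h₁ h₂ using h
    exact ⟨_, _, hR.compat.sqCube_mem o h₁, hR.compat.sqCube_mem o h₂⟩
  refl_zero h := by
    obtain ⟨b, d, h₁, h₂⟩ := sqCube_mem_compOne.1 h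
    exact sqCube_mem_compOne.2 ⟨_, _, hR.refl_zero h₁, hR.refl_zero h₂⟩
  refl_one h := by
    obtain ⟨b, d, h₁, -⟩ := sqCube_mem_compOne.1 h
    exact sqCube_mem_compOne.2 ⟨_, _, hR.refl_one h₁, hR.refl_one h₁⟩
  symm_zero h := by
    obtain ⟨b, d, h₁, h₂⟩ := sqCube_mem_compOne.1 h
    exact sqCube_mem_compOne.2 ⟨_, _, hR.symm_zero h₁, hR.symm_zero h₂⟩
  symm_one h := by
    obtain ⟨b, d, h₁, h₂⟩ := sqCube_mem_compOne.1 h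
    exact sqCube_mem_compOne.2 ⟨_, _, hR.symm_one h₂, hR.symm_one h₁⟩
  gen_zero hxy := sqCube_mem_compOne.2 ⟨_, _, hR.gen_zero hxy, hR.gen_zero hxy⟩
  gen_one hxy := sqCube_mem_compOne.2 ⟨_, _, hR.gen_one (hθ.refl _), hR.gen_one hxy⟩
  edge_mem h := by
    obtain ⟨b, d, h₁, h₂⟩ := sqCube_mem_compOne.1 h
    exact ⟨hθ.trans (hR.edge_mem h₁).1 (hR.edge_mem h₂).1, (hR.edge_mem h₁).2⟩
  central h := by
    obtain ⟨b, d, h₁, h₂⟩ := sqCube_mem_compOne.1 h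
    have h₂' := hR.symm_one h₂
    exact ⟨hR.mem_of_shared_column hT hθ hδ h₁ h₂',
      hR.mem_of_shared_column hT hθ hδ (hR.symm_zero h₁) (hR.symm_zero h₂')⟩

theorem sUnion {C : Set (Set (Cube (Fin 2) A))} (hC : IsChain (· ⊆ ·) C) (hne : C.Nonempty)
    (h : ∀ R ∈ C, IsCentralTolerance σ θ δ R) : IsCentralTolerance σ θ δ (⋃₀ C) where
  compat o γ hγ := by
    obtain ⟨R, hRC, hγR⟩ := hC.directedOn.exists_mem_subset_of_finite_of_subset_sUnion hne
      (Set.finite_range γ) (Set.range_subset_iff.2 hγ)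
    exact ⟨R, hRC, (h R hRC).compat o γ fun k => hγR ⟨k, rfl⟩⟩
  refl_zero := fun ⟨R, hRC, hγ⟩ => ⟨R, hRC, (h R hRC).refl_zero hγ⟩
  refl_one := fun ⟨R, hRC, hγ⟩ => ⟨R, hRC, (h R hRC).refl_one hγ⟩
  symm_zero := fun ⟨R, hRC, hγ⟩ => ⟨R, hRC, (h R hRC).symm_zero hγ⟩
  symm_one := fun ⟨R, hRC, hγ⟩ => ⟨R, hRC, (h R hRC).symm_one hγ⟩
  gen_zero hxy := ⟨hne.some, hne.some_mem, (h _ hne.some_mem).gen_zero hxy⟩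
  gen_one hxy := ⟨hne.some, hne.some_mem, (h _ hne.some_mem).gen_one hxy⟩
  edge_mem := fun ⟨R, hRC, hγ⟩ => (h R hRC).edge_mem hγ
  central := fun ⟨R, hRC, hγ⟩ => (h R hRC).central hγ

theorem isHCongruence_of_maximal (hR : Maximal (IsCentralTolerance σ θ δ) R)
    (hT : IsTaylorAlg σ A) (hθ : IsCongruence σ θ) (hδ : IsCongruence σ δ) :
    IsHCongruence σ R := by
  have h := hR.1
  have hzero := hR.2 (h.compZero hθ) h.subset_compZero
  have hone := hR.2 (h.compOne hT hθ hδ) h.subset_compOne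
  refine ⟨⟨h.compat, sRefl_iff_sqCube.2 fun a b c d hγ => ?_,
    sSymm_iff_sqCube.2 fun a b c d hγ => ⟨h.symm_one hγ, h.symm_zero hγ⟩⟩,
    sTrans_of_sqCube (fun a b c d e f h₁ h₂ => hzero (sqCube_mem_compZero.2 ⟨c, d, h₁, h₂⟩))
      (fun a b c d e f h₁ h₂ => hone (sqCube_mem_compOne.2 ⟨b, d, h₁, h₂⟩))⟩
  exact ⟨⟨h.refl_one hγ, h.refl_one (h.symm_one hγ)⟩,
    ⟨h.refl_zero hγ, h.refl_zero (h.symm_zero hγ)⟩⟩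

end IsCentralTolerance

section Commutators

variable {σ : Signature} {A : Type u} [Alg σ A] {θ δ : Set (A × A)}

theorem isTolerance_rectRel (hθ : IsCongruence σ θ) :
    IsTolerance σ (rectRel (fun _ : Fin 2 => θ)) := by
  refine ⟨compatCube_of_sqCube fun o a b c d h => ?_, sRefl_iff_sqCube.2 fun a b c d h => ?_,
    sSymm_iff_sqCube.2 fun a b c d h => ?_⟩ <;> simp only [sqCube_mem_rectRel] at h ⊢
  · exact ⟨⟨hθ.compatRel o _ _ fun k => (h k).1.1, hθ.compatRel o _ _ fun k => (h k).1.2⟩,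
      hθ.compatRel o _ _ fun k => (h k).2.1, hθ.compatRel o _ _ fun k => (h k).2.2⟩
  · obtain ⟨⟨hac, hbd⟩, hab, hcd⟩ := h
    exact ⟨⟨⟨⟨hac, hac⟩, hθ.refl a, hθ.refl c⟩, ⟨hbd, hbd⟩, hθ.refl b, hθ.refl d⟩,
      ⟨⟨hθ.refl a, hθ.refl b⟩, hab, hab⟩, ⟨hθ.refl c, hθ.refl d⟩, hcd, hcd⟩
  · obtain ⟨⟨hac, hbd⟩, hab, hcd⟩ := h
    exact ⟨⟨⟨hbd, hac⟩, hθ.symm hab, hθ.symm hcd⟩, ⟨hθ.symm hac, hθ.symm hbd⟩, hcd, hab⟩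

theorem isCentralTolerance_MRel (hθ : IsCongruence σ θ)
    (hM : Centrality δ (lastIdx 2) (MRel σ fun _ : Fin 2 => θ)) :
    IsCentralTolerance σ θ δ (MRel σ fun _ : Fin 2 => θ) := by
  obtain ⟨hcompat, hrefl, hsymm⟩ := isTolerance_tolGen σ (⋃ i : Fin 2, cubeSet i θ)
  rw [sRefl_iff_sqCube] at hrefl
  rw [sSymm_iff_sqCube] at hsymm
  have hgen := iUnion_cubeSet_subset_iff.1 (subset_tolGen σ (⋃ i : Fin 2, cubeSet i θ))
  have hrect := tolGen_subset σ (isTolerance_rectRel hθ) (iUnion_cubeSet_subset_iff.2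
    fun x y hxy => by
      simp only [sqCube_mem_rectRel]
      exact ⟨⟨⟨hxy, hxy⟩, hθ.refl x, hθ.refl y⟩, ⟨hθ.refl x, hθ.refl y⟩, hxy, hxy⟩)
  exact {
    compat := hcompat
    refl_zero := fun h => (hrefl _ _ _ _ h).2.1
    refl_one := fun h => (hrefl _ _ _ _ h).1.1
    symm_zero := fun h => (hsymm _ _ _ _ h).2
    symm_one := fun h => (hsymm _ _ _ _ h).1
    gen_zero := fun h => (hgen _ _ h).1
    gen_one := fun h => (hgen _ _ h).2
    edge_mem := fun h => have h' := sqCube_mem_rectRel.1 (hrect h); ⟨h'.2.1, h'.1.1⟩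
    central := centrality_two_iff.1 hM _ _ _ _ }

theorem centrality_DeltaRel_of_MRel (hT : IsTaylorAlg σ A) (hθ : IsCongruence σ θ)
    (hδ : IsCongruence σ δ) (hM : Centrality δ (lastIdx 2) (MRel σ fun _ : Fin 2 => θ)) :
    Centrality δ (lastIdx 2) (DeltaRel σ fun _ : Fin 2 => θ) := by
  obtain ⟨R, hMR, hR⟩ := zorn_subset_nonempty {R | IsCentralTolerance σ θ δ R}
    (fun C hC hchain hne => ⟨⋃₀ C, IsCentralTolerance.sUnion hchain hne hC,
      fun _ => Set.subset_sUnion_of_mem⟩) _ (isCentralTolerance_MRel hθ hM)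
  have hΔR : DeltaRel σ (fun _ : Fin 2 => θ) ⊆ R :=
    congGen_subset σ (IsCentralTolerance.isHCongruence_of_maximal hR hT hθ hδ)
      ((subset_tolGen σ _).trans hMR)
  exact (centrality_two_iff.2 fun _ _ _ _ h => hR.1.central h).mono hΔR

theorem isCongruence_tcComm (n : ℕ) [NeZero n] (θs : Fin n → Set (A × A)) :
    IsCongruence σ (tcComm σ n θs) :=
  IsCongruence.sInter fun _ h => h.1

theorem centrality_tcComm_two (θs : Fin 2 → Set (A × A)) :
    Centrality (tcComm σ 2 θs) (lastIdx 2) (MRel σ θs) :=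
  centrality_two_iff.2 fun _ _ _ _ h =>
    ⟨fun hab δ hδ => (centrality_two_iff.1 hδ.2 _ _ _ _ h).1 (hab δ hδ),
      fun hcd δ hδ => (centrality_two_iff.1 hδ.2 _ _ _ _ h).2 (hcd δ hδ)⟩

end Commutators

/-- for a Taylor algebra, the binary hypercommutator equals the binary
term condition commutator: `[θ,θ]_H = [θ,θ]_TC`. -/
theorem stmt14 {A : Type u} (σ : Signature) [Alg σ A] (hT : IsTaylorAlg σ A)
    (θ : Set (A × A)) (hθ : IsCongruence σ θ) :
    hComm σ 2 (fun _ : Fin 2 => θ) = tcComm σ 2 (fun _ : Fin 2 => θ) := by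
  refine Set.Subset.antisymm (Set.sInter_subset_of_mem ⟨isCongruence_tcComm 2 _, ?_⟩)
    (Set.sInter_subset_sInter fun δ hδ => ⟨hδ.1, hδ.2.mono (MRel_subset_DeltaRel σ _)⟩)
  exact centrality_DeltaRel_of_MRel hT hθ (isCongruence_tcComm 2 _) (centrality_tcComm_two _)
end

section
/- Let 𝔸 be an algebra, n ≥ 2, and θ_0, …, θ_{n−1} congruences. The following are equivalent: (1) ⟨x,y⟩ ∈ [θ_0,…,θ_{n−1}]_H; (2) the commutator cube com_n(x,y) lies in Δ(θ_0,…,θ_{n−1}); (3) there exists i ∈ n such that ⟨x,y⟩ is (i)-supported by some γ ∈ Δ(θ_0,…,θ_{n−1}). Consequently, the hypercommutator is symmetric: [θ_0,…,θ_{n−1}]_H = [θ_{σ(0)},…,θ_{σ(n−1)}]_H for every permutation σ. -/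
universe u v

/-!
Write `Δ` for `Δ(θ₀, …, θₙ₋₁)` and `C` for the relation `{(x, y) | com_n(x, y) ∈ Δ}`. Apart from
compatibility, the only property of `Δ` that is used is its closure under collapsing, reflecting
and composing cubes along any one direction. Splitting off the last direction turns an
`(m+1)`-cube into an `m`-cube of pairs (its lines), and the set of cubes of pairs whose
unsplit cube lies in `Δ` is closed under the same operations; this drives every induction on
the dimension.

* Vertex replacement: if `Λ ∈ Δ` and `com(d, Λ v) ∈ Δ`, then relabelling the vertex `v` of `Λ`
  by `d` stays in `Δ`. Relabelling the top of a constant cube, resp. of `com(x, y)`, shows that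
  `C` is symmetric and transitive, hence a congruence.
* Support: if the lines of a cube of `Δ` are constant except the one over `g`, which is `(x, y)`,
  then `com(x, y) ∈ Δ`. Combined with vertex replacement, which makes constant every line that
  already lies in `C`, this shows: if all lines but one of a cube of `Δ` lie in `C`, so does the
  last one. This is exactly the centrality of `C`.

Since `com(x, y)` has all its lines constant except `(x, y)`, every central congruence contains
`C`, whence `[θ]_H = C`. As `com(x, y)` is invariant under permutations of the directions, `C`
and hence `[θ]_H` are symmetric in the `θᵢ`.
-/

open Function

namespace HyperCommutator

section Faces

variable {X S : Type*} [DecidableEq S] {i : S}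

theorem face_restrict (b : Bool) (γ : Cube S X) (f : S → Bool) :
    face i b γ (fun j => f j) = γ (update f i b) := by
  show γ _ = γ _
  congr 1
  ext j
  by_cases h : j = i <;> simp [h]

theorem exists_restrict_eq (g : {j : S // j ≠ i} → Bool) :
    ∃ f : S → Bool, (fun j : {j // j ≠ i} => f j) = g :=
  ⟨fun j => if h : j = i then true else g ⟨j, h⟩, funext fun j => dif_neg j.2⟩

theorem restrict_eq_top_iff {f : S → Bool} :
    (fun j : {j // j ≠ i} => f j) = (fun _ => true) ↔ update f i true = ⊤ := by
  refine ⟨fun h => funext fun j => ?_, fun h => funext fun j => ?_⟩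
  · by_cases hj : j = i
    · simp [hj]
    · simpa [hj] using congrFun h ⟨j, hj⟩
  · simpa [j.2] using congrFun h j

theorem face_eq_face_iff {b c : Bool} {γ δ : Cube S X} :
    face i b γ = face i c δ ↔ ∀ f, γ (update f i b) = δ (update f i c) := by
  refine ⟨fun h f => ?_, fun h => funext fun g => ?_⟩
  · simpa only [face_restrict] using congrFun h fun j => f j
  · obtain ⟨f, rfl⟩ := exists_restrict_eq g
    simpa only [face_restrict] using h f

theorem face_glue_false (a b : Cube {j // j ≠ i} X) : face i false (glue i a b) = a := by
  funext g
  simp only [face, glue, dite_true, Bool.false_eq_true, if_false]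
  exact congrArg a (funext fun j => dif_neg j.2)

theorem face_glue_true (a b : Cube {j // j ≠ i} X) : face i true (glue i a b) = b := by
  funext g
  simp only [face, glue, dite_true, if_true]
  exact congrArg b (funext fun j => dif_neg j.2)

theorem glue_face_face (b : Bool) (γ : Cube S X) :
    glue i (face i b γ) (face i b γ) = fun f => γ (update f i b) := by
  funext f
  simp only [glue, face_restrict, ite_self]

theorem glue_face_swap (γ : Cube S X) :
    glue i (face i true γ) (face i false γ) = fun f => γ (update f i !f i) := by
  funext f
  cases h : f i <;> simp [glue, face_restrict, h]

theorem glue_face_false_true (γ δ : Cube S X) :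
    glue i (face i false γ) (face i true δ) = fun f => if f i then δ f else γ f := by
  funext f
  cases h : f i <;> simp only [glue, face_restrict, h, if_true, Bool.false_eq_true, if_false] <;>
    rw [← h, update_eq_self]

theorem glue_face (γ : Cube S X) : glue i (face i false γ) (face i true γ) = γ := by
  simp [glue_face_false_true]

theorem mem_facesRel_iff {R : Set (Cube S X)} {a b : Cube {j // j ≠ i} X} :
    (a, b) ∈ facesRel i R ↔ glue i a b ∈ R := by
  refine ⟨?_, fun h => ⟨_, h, by rw [face_glue_false, face_glue_true]⟩⟩
  rintro ⟨γ, hγ, h⟩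
  simp only [Prod.mk.injEq] at h
  rwa [h.1, h.2, glue_face]

@[simp]
theorem update_top_true (i : S) : update (⊤ : S → Bool) i true = ⊤ := update_eq_self i ⊤

theorem update_false_ne_top (f : S → Bool) (i : S) : update f i false ≠ ⊤ :=
  fun h => by simpa using congrFun h i

theorem iSupported_iff {γ : Cube S X} {x y : X} :
    iSupported i γ x y ↔ γ (update ⊤ i false) = x ∧ γ ⊤ = y ∧
      ∀ f : S → Bool, update f i true ≠ ⊤ → γ (update f i false) = γ (update f i true) := by
  have htop (b : Bool) : face i b γ (fun _ => true) = γ (update ⊤ i b) := face_restrict b γ ⊤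
  simp only [iSupported, htop, update_top_true]
  refine and_congr_right' (and_congr_right' ⟨fun h f hf => ?_, fun h g hg => ?_⟩)
  · simpa only [face_restrict] using h (fun j => f j) (mt restrict_eq_top_iff.1 hf)
  · obtain ⟨f, rfl⟩ := exists_restrict_eq g
    simpa only [face_restrict] using h f (mt restrict_eq_top_iff.2 hg)

end Faces

/-- S-reflexivity, S-symmetry and S-transitivity, phrased through `update` instead of faces. -/
structure IsHEquivalence {X S : Type*} [DecidableEq S] (R : Set (Cube S X)) : Prop where
  refl_mem {γ : Cube S X} (i : S) (b : Bool) : γ ∈ R → (fun f => γ (update f i b)) ∈ R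
  symm_mem {γ : Cube S X} (i : S) : γ ∈ R → (fun f => γ (update f i !f i)) ∈ R
  trans_mem {γ δ : Cube S X} (i : S) : γ ∈ R → δ ∈ R →
    (∀ f, γ (update f i true) = δ (update f i false)) → (fun f => if f i then δ f else γ f) ∈ R

section HEquivalence

variable {X S : Type*} [DecidableEq S]

theorem isHEquivalence_sInter {𝓡 : Set (Set (Cube S X))} (h : ∀ R ∈ 𝓡, IsHEquivalence R) :
    IsHEquivalence (⋂₀ 𝓡) where
  refl_mem i b hγ := Set.mem_sInter.2 fun R hR => (h R hR).refl_mem i b (hγ R hR)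
  symm_mem i hγ := Set.mem_sInter.2 fun R hR => (h R hR).symm_mem i (hγ R hR)
  trans_mem i hγ hδ hγδ :=
    Set.mem_sInter.2 fun R hR => (h R hR).trans_mem i (hγ R hR) (hδ R hR) hγδ

theorem isHCongruence_iff {σ : Signature} [Alg σ X] {R : Set (Cube S X)} :
    IsHCongruence σ R ↔ CompatCube σ R ∧ IsHEquivalence R := by
  refine ⟨fun ⟨⟨hcomp, hrefl, hsymm⟩, htrans⟩ => ⟨hcomp, ⟨?_, ?_, ?_⟩⟩,
    fun ⟨hcomp, hR⟩ => ⟨⟨hcomp, ?_, ?_⟩, ?_⟩⟩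
  · intro γ i b hγ
    rw [← glue_face_face]
    have := hrefl i _ _ ⟨γ, hγ, rfl⟩
    exact mem_facesRel_iff.1 (by cases b; exacts [this.1, this.2])
  · intro γ i hγ
    rw [← glue_face_swap]
    exact mem_facesRel_iff.1 (hsymm i _ _ ⟨γ, hγ, rfl⟩)
  · intro γ δ i hγ hδ hγδ
    rw [← glue_face_false_true]
    refine mem_facesRel_iff.1 (htrans i _ _ _ ⟨γ, hγ, rfl⟩ ?_)
    rw [face_eq_face_iff.2 hγδ]
    exact ⟨δ, hδ, rfl⟩
  · intro i a b hab
    rw [mem_facesRel_iff] at hab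
    have ha := hR.refl_mem i false hab
    have hb := hR.refl_mem i true hab
    rw [← glue_face_face, face_glue_false] at ha
    rw [← glue_face_face, face_glue_true] at hb
    exact ⟨mem_facesRel_iff.2 ha, mem_facesRel_iff.2 hb⟩
  · intro i a b hab
    rw [mem_facesRel_iff] at hab ⊢
    simpa only [← glue_face_swap, face_glue_false, face_glue_true] using hR.symm_mem i hab
  · intro i a b c hab hbc
    rw [mem_facesRel_iff] at hab hbc ⊢
    have hmatch := face_eq_face_iff.1 ((face_glue_true a b).trans (face_glue_false b c).symm)
    simpa only [← glue_face_false_true, face_glue_false, face_glue_true] using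
      hR.trans_mem i hab hbc hmatch

namespace IsHEquivalence

variable {R : Set (Cube S X)}

theorem update_map_mem (hR : IsHEquivalence R) {γ : Cube S X} (i : S) (φ : Bool → Bool)
    (hγ : γ ∈ R) : (fun f => γ (update f i (φ (f i)))) ∈ R := by
  cases h₀ : φ false <;> cases h₁ : φ true
  · convert hR.refl_mem i false hγ using 4 with f; cases f i <;> assumption
  · convert hγ using 2 with f
    rw [show φ (f i) = f i by cases f i <;> assumption, update_eq_self]
  · convert hR.symm_mem i hγ using 4 with f; cases f i <;> assumption
  · convert hR.refl_mem i true hγ using 4 with f; cases f i <;> assumption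

theorem map_coords_mem [Fintype S] (hR : IsHEquivalence R) {γ : Cube S X}
    (φ : S → Bool → Bool) (hγ : γ ∈ R) : (fun f => γ (fun i => φ i (f i))) ∈ R := by
  suffices ∀ J : Finset S, ∀ γ ∈ R, (fun f => γ (J.piecewise (fun i => φ i (f i)) f)) ∈ R by
    simpa using this Finset.univ γ hγ
  intro J
  induction J using Finset.induction_on with
  | empty => simp
  | insert j J hj ih =>
    intro γ hγ
    convert ih _ (hR.update_map_mem j (φ j) hγ) using 3 with f
    rw [Finset.piecewise_insert, Finset.piecewise_eq_of_notMem _ _ _ hj]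

theorem cubeAt_mem [Fintype S] (hR : IsHEquivalence R) {γ : Cube S X} (hγ : γ ∈ R) (i : S) :
    cubeAt i (γ (update ⊤ i false), γ ⊤) ∈ R := by
  convert hR.map_coords_mem (fun j b => if j = i then b else true) hγ using 1
  funext f
  have : (fun j => if j = i then f j else true) = update ⊤ i (f i) := by
    funext j; by_cases h : j = i <;> simp [h]
  show _ = γ (fun j => if j = i then f j else true)
  rw [this]
  cases h : f i <;> simp [cubeAt, h]

theorem cubeAt_swap_mem (hR : IsHEquivalence R) {i : S} {p : X × X} (hp : cubeAt i p ∈ R) :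
    cubeAt i p.swap ∈ R := by
  convert hR.symm_mem i hp using 1
  funext f
  cases h : f i <;> simp [cubeAt, h]

theorem cubeAt_trans_mem (hR : IsHEquivalence R) {i : S} {a b c : X}
    (hab : cubeAt i (a, b) ∈ R) (hbc : cubeAt i (b, c) ∈ R) : cubeAt i (a, c) ∈ R := by
  convert hR.trans_mem i hab hbc (fun f => by simp [cubeAt]) using 1
  funext f
  cases h : f i <;> simp [cubeAt, h]

end IsHEquivalence

end HEquivalence

section Reflection

variable {S : Type*}

def reflection (v : S → Bool) : Equiv.Perm (S → Bool) :=
  Involutive.toPerm (fun f i => f i == v i) fun f => funext fun i => by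
    show ((f i == v i) == v i) = f i
    cases f i <;> cases v i <;> rfl

@[simp]
theorem reflection_top (v : S → Bool) : reflection v ⊤ = v :=
  funext fun i => by
    show (true == v i) = v i
    cases v i <;> rfl

@[simp]
theorem reflection_symm (v : S → Bool) : (reflection v).symm = reflection v := rfl

@[simp]
theorem reflection_reflection (v f : S → Bool) : reflection v (reflection v f) = f :=
  (reflection v).symm_apply_apply f

@[simp]
theorem reflection_self (v : S → Bool) : reflection v v = ⊤ :=
  funext fun i => beq_self_eq_true (v i)

theorem IsHEquivalence.comp_reflection_mem {X : Type*} [DecidableEq S] [Fintype S]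
    {R : Set (Cube S X)} (hR : IsHEquivalence R) {γ : Cube S X} (hγ : γ ∈ R) (v : S → Bool) :
    γ ∘ reflection v ∈ R :=
  hR.map_coords_mem (fun i b => b == v i) hγ

end Reflection

section Reindex

variable {X S : Type*}

def reindex (π : Equiv.Perm S) (γ : Cube S X) : Cube S X := fun f => γ (f ∘ π)

theorem reindex_symm_reindex (π : Equiv.Perm S) (γ : Cube S X) :
    reindex π.symm (reindex π γ) = γ := by
  funext f
  simp [reindex, Function.comp_assoc]

variable [DecidableEq S]

theorem IsHEquivalence.preimage_reindex {R : Set (Cube S X)} (hR : IsHEquivalence R)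
    (π : Equiv.Perm S) : IsHEquivalence (reindex π ⁻¹' R) where
  refl_mem i b hγ := by
    show reindex π _ ∈ R
    convert hR.refl_mem (π i) b hγ using 2 with f
    simp [reindex, update_comp_equiv]
  symm_mem i hγ := by
    show reindex π _ ∈ R
    convert hR.symm_mem (π i) hγ using 2 with f
    simp [reindex, update_comp_equiv]
  trans_mem i hγ hδ hγδ := hR.trans_mem (π i) hγ hδ fun f => by
    simpa [reindex, update_comp_equiv] using hγδ (f ∘ π)

theorem iSupported_reindex {i : S} {γ : Cube S X} {x y : X} (h : iSupported i γ x y)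
    (π : Equiv.Perm S) : iSupported (π i) (reindex π γ) x y := by
  obtain ⟨hx, hy, hconst⟩ := iSupported_iff.1 h
  refine iSupported_iff.2 ⟨by simpa [reindex, update_comp_equiv] using hx, hy, fun f hf => ?_⟩
  simp only [reindex, update_comp_equiv, Equiv.symm_apply_apply]
  refine hconst _ fun h => hf (funext fun k => ?_)
  rw [← π.apply_symm_apply k, update_apply_equiv_apply, Equiv.symm_apply_apply]
  exact congrFun h (π.symm k)

end Reindex

section DeltaRel

variable {X S : Type*} [DecidableEq S] {σ : Signature} [Alg σ X] {θ : S → Set (X × X)}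

theorem isHEquivalence_DeltaRel : IsHEquivalence (DeltaRel σ θ) :=
  isHEquivalence_sInter fun _ hR => (isHCongruence_iff.1 hR.1).2

theorem compatCube_DeltaRel : CompatCube σ (DeltaRel σ θ) := fun o γ h =>
  Set.mem_sInter.2 fun R hR => (isHCongruence_iff.1 hR.1).1 o γ fun k => h k R hR

theorem cubeAt_mem_DeltaRel {i : S} {p : X × X} (hp : p ∈ θ i) : cubeAt i p ∈ DeltaRel σ θ :=
  Set.mem_sInter.2 fun _ hR => hR.2 (Set.mem_iUnion.2 ⟨i, p, hp, rfl⟩)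

theorem DeltaRel_subset {R : Set (Cube S X)} (hcomp : CompatCube σ R) (hR : IsHEquivalence R)
    (hgen : ∀ i, ∀ p ∈ θ i, cubeAt i p ∈ R) : DeltaRel σ θ ⊆ R := by
  refine Set.sInter_subset_of_mem ⟨isHCongruence_iff.2 ⟨hcomp, hR⟩, ?_⟩
  rintro _ ⟨_, ⟨i, rfl⟩, p, hp, rfl⟩
  exact hgen i p hp

theorem DeltaRel_subset_preimage_reindex (θ : S → Set (X × X)) (π : Equiv.Perm S) :
    DeltaRel σ θ ⊆ reindex π ⁻¹' DeltaRel σ (θ ∘ π.symm) :=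
  DeltaRel_subset (fun o γ h => compatCube_DeltaRel o _ h)
    (isHEquivalence_DeltaRel.preimage_reindex π)
    fun i p hp => cubeAt_mem_DeltaRel (i := π i) (by simpa using hp)

end DeltaRel

section SplitLast

variable {X : Type*} {m : ℕ}

theorem comCube_top (n : ℕ) (x y : X) : comCube n x y ⊤ = y := if_pos fun _ => rfl

theorem comCube_of_ne_top {n : ℕ} (x y : X) {f : Fin n → Bool} (hf : f ≠ ⊤) :
    comCube n x y f = x :=
  if_neg fun h => hf (funext h)

theorem comCube_apply {n : ℕ} (x y : X) (f : Fin n → Bool) :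
    comCube n x y f = if f = ⊤ then y else x := by
  split_ifs with h
  · rw [h, comCube_top]
  · exact comCube_of_ne_top x y h

theorem comCube_self (n : ℕ) (x : X) : comCube n x x = fun _ => x := by
  simp [funext_iff, comCube_apply]

theorem comCube_zero (x y : X) : comCube 0 x y = fun _ => y := by
  simp [funext_iff, comCube_apply, Subsingleton.elim _ (⊤ : Fin 0 → Bool)]

theorem update_comCube_top (n : ℕ) (x y z : X) :
    update (comCube n x y) ⊤ z = comCube n x z := by
  funext f
  by_cases hf : f = ⊤ <;> simp [comCube_apply, hf]

theorem reindex_comCube {n : ℕ} (π : Equiv.Perm (Fin n)) (x y : X) :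
    reindex π (comCube n x y) = comCube n x y := by
  funext f
  have : f ∘ π = ⊤ ↔ f = ⊤ :=
    ⟨fun h => funext fun k => by simpa using congrFun h (π.symm k), fun h => by subst h; rfl⟩
  simp [reindex, comCube_apply, this]

theorem snoc_eq_top_iff {f : Fin m → Bool} {b : Bool} :
    (Fin.snoc f b : Fin (m + 1) → Bool) = ⊤ ↔ f = ⊤ ∧ b = true := by
  rw [← Fin.snoc_init_self (⊤ : Fin (m + 1) → Bool), Fin.snoc_inj]
  rfl

theorem snoc_top (b : Bool) :
    (Fin.snoc (⊤ : Fin m → Bool) b : Fin (m + 1) → Bool) = update ⊤ (Fin.last m) b := by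
  rw [← Fin.update_snoc_last (x := true), snoc_eq_top_iff.2 ⟨rfl, rfl⟩]

def joinLast (Γ : Cube (Fin m) (X × X)) : Cube (Fin (m + 1)) X :=
  fun v => if v (Fin.last m) then (Γ (Fin.init v)).2 else (Γ (Fin.init v)).1

def splitLast (γ : Cube (Fin (m + 1)) X) : Cube (Fin m) (X × X) :=
  fun f => (γ (Fin.snoc f false), γ (Fin.snoc f true))

@[simp]
theorem joinLast_snoc (Γ : Cube (Fin m) (X × X)) (f : Fin m → Bool) (b : Bool) :
    joinLast Γ (Fin.snoc f b) = if b then (Γ f).2 else (Γ f).1 := by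
  simp [joinLast]

@[simp]
theorem joinLast_splitLast (γ : Cube (Fin (m + 1)) X) : joinLast (splitLast γ) = γ := by
  funext v
  induction v using Fin.snocCases with
  | snoc f b => cases b <;> simp [splitLast]

theorem comCube_succ (x y : X) :
    comCube (m + 1) x y = joinLast (comCube m (x, x) (x, y)) := by
  funext v
  induction v using Fin.snocCases with
  | snoc f b => cases b <;> by_cases hf : f = ⊤ <;> simp [comCube_apply, snoc_eq_top_iff, hf]

theorem joinLast_update (Γ : Cube (Fin m) (X × X)) (g : Fin m → Bool) (d : X) :
    joinLast (update Γ g ((Γ g).1, d)) = update (joinLast Γ) (Fin.snoc g true) d := by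
  funext v
  induction v using Fin.snocCases with
  | snoc f b =>
    by_cases hf : f = g
    · subst hf; cases b <;> simp [Fin.snoc_inj]
    · simp [Fin.snoc_inj, hf]

theorem IsHEquivalence.preimage_joinLast {R : Set (Cube (Fin (m + 1)) X)}
    (hR : IsHEquivalence R) : IsHEquivalence (joinLast ⁻¹' R) where
  refl_mem i b hΓ := by
    show joinLast _ ∈ R
    convert hR.refl_mem i.castSucc b hΓ using 2 with v
    simp [joinLast, Fin.init_update_castSucc, (Fin.castSucc_lt_last i).ne']
  symm_mem i hΓ := by
    show joinLast _ ∈ R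
    convert hR.symm_mem i.castSucc hΓ using 2 with v
    simp [joinLast, Fin.init_update_castSucc, (Fin.castSucc_lt_last i).ne', Fin.init]
  trans_mem i hΓ hΔ hΓΔ := by
    show joinLast _ ∈ R
    convert hR.trans_mem i.castSucc hΓ hΔ (fun v => by
      simp [joinLast, Fin.init_update_castSucc, (Fin.castSucc_lt_last i).ne', hΓΔ]) using 2 with v
    by_cases h : v i.castSucc <;> simp [joinLast, Fin.init, h]

theorem IsHEquivalence.joinLast_fst_mem {R : Set (Cube (Fin (m + 1)) X)}
    (hR : IsHEquivalence R) {Γ : Cube (Fin m) (X × X)} (hΓ : joinLast Γ ∈ R) :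
    joinLast (fun f => ((Γ f).1, (Γ f).1)) ∈ R := by
  convert hR.refl_mem (Fin.last m) false hΓ using 2 with v
  simp [joinLast]

end SplitLast

namespace IsHEquivalence

variable {X : Type*} {m : ℕ} {R : Set (Cube (Fin (m + 1)) X)}

theorem cubeAt_replace_mem (hR : IsHEquivalence R) {Λ : Cube (Fin (m + 1)) X} {d : X}
    (hΛ : Λ ∈ R) (hcom : comCube (m + 1) d (Λ ⊤) ∈ R) (i : Fin (m + 1)) :
    cubeAt i (Λ (update ⊤ i false), d) ∈ R := by
  refine hR.cubeAt_trans_mem (hR.cubeAt_mem hΛ i) ?_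
  simpa [comCube_top, comCube_of_ne_top _ _ (update_false_ne_top _ i)] using
    hR.cubeAt_swap_mem (hR.cubeAt_mem hcom i)

theorem update_top_mem (hR : IsHEquivalence R) {Λ : Cube (Fin (m + 1)) X} {d : X} (hΛ : Λ ∈ R)
    (hcom : comCube (m + 1) d (Λ ⊤) ∈ R) : update Λ ⊤ d ∈ R := by
  induction m generalizing X with
  | zero =>
    convert hR.cubeAt_replace_mem hΛ hcom 0 using 1
    funext v
    obtain ⟨b, rfl⟩ : ∃ b, v = update ⊤ 0 b := ⟨v 0, funext fun j => by fin_cases j; simp⟩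
    cases b <;> simp [cubeAt]
  | succ m ih =>
    set a := Λ (update ⊤ (Fin.last _) false)
    -- the lines of `V` in the last direction form `com((a, d), (a, Λ ⊤))`
    set V : Cube (Fin (m + 2)) X := fun f => if f (Fin.last _) then comCube (m + 2) d (Λ ⊤) f
      else cubeAt (Fin.last _) (a, d) f
    have hV : V ∈ R := hR.trans_mem _ (hR.cubeAt_replace_mem hΛ hcom _) hcom fun f => by
      simp [cubeAt, comCube_of_ne_top _ _ (update_false_ne_top f _)]
    have hsplit : comCube (m + 1) (a, d) (splitLast Λ ⊤) = splitLast V := by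
      funext f
      by_cases hf : f = ⊤ <;> simp [V, a, splitLast, comCube_apply, cubeAt, snoc_eq_top_iff, hf,
        snoc_top]
    have ha : (splitLast Λ ⊤).1 = a := by simp [a, splitLast, snoc_top]
    have := ih hR.preimage_joinLast (Λ := splitLast Λ) (d := (a, d)) (by simpa using hΛ)
      (by simpa [hsplit] using hV)
    rwa [← ha, Set.mem_preimage, joinLast_update, joinLast_splitLast, snoc_top, update_top_true]
      at this

theorem update_mem (hR : IsHEquivalence R) {Λ : Cube (Fin (m + 1)) X} {d : X} (hΛ : Λ ∈ R)
    (v : Fin (m + 1) → Bool) (hcom : comCube (m + 1) d (Λ v) ∈ R) : update Λ v d ∈ R := by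
  have hρ := hR.update_top_mem (hR.comp_reflection_mem hΛ v) (d := d) (by simpa using hcom)
  convert hR.comp_reflection_mem hρ v using 1
  have hupdate : update (Λ ∘ reflection v) ⊤ d = update Λ v d ∘ reflection v := by
    rw [update_comp_equiv, reflection_symm, reflection_self]
  funext f
  simp [hupdate]

theorem comCube_symm (hR : IsHEquivalence R) {x y : X} (h : comCube (m + 1) x y ∈ R) :
    comCube (m + 1) y x ∈ R := by
  have hy : comCube (m + 1) y y ∈ R := by
    have := hR.map_coords_mem (fun _ _ => true) h
    rwa [show (fun f => comCube (m + 1) x y fun _ => true) = fun _ => y from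
      funext fun _ => comCube_top _ _ _, ← comCube_self] at this
  simpa [update_comCube_top] using hR.update_top_mem hy (d := x) (by simpa [comCube_top])

theorem comCube_trans (hR : IsHEquivalence R) {x y z : X} (hxy : comCube (m + 1) x y ∈ R)
    (hyz : comCube (m + 1) y z ∈ R) : comCube (m + 1) x z ∈ R := by
  simpa [update_comCube_top] using
    hR.update_top_mem hxy (d := z) (by simpa [comCube_top] using hR.comCube_symm hyz)

theorem comCube_mem_of_const_off_top (hR : IsHEquivalence R) {Γ : Cube (Fin m) (X × X)}
    (hΓ : joinLast Γ ∈ R) (hconst : ∀ f ≠ ⊤, (Γ f).1 = (Γ f).2) :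
    comCube (m + 1) (Γ ⊤).1 (Γ ⊤).2 ∈ R := by
  induction m generalizing X with
  | zero =>
    convert hΓ
    rw [comCube_succ, comCube_zero]
    exact congrArg joinLast (funext fun f => by rw [Subsingleton.elim f ⊤])
  | succ m ih =>
    set j := Fin.last m
    set Γ₁ : Cube (Fin (m + 1)) (X × X) :=
      fun f => ((Γ (update f j !f j)).1, (Γ (update f j !f j)).1)
    have hΓ₁ : joinLast Γ₁ ∈ R := hR.preimage_joinLast.symm_mem j (hR.joinLast_fst_mem hΓ)
    -- `Γ₂` keeps the upper half of `Γ` in direction `j` and puts its diagonal below it, so that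
    -- all lines of `Γ₂` in direction `j` are constant except the one over `⊤`
    set Γ₂ : Cube (Fin (m + 1)) (X × X) := fun f => if f j then Γ f else Γ₁ f
    have hΓ₂ : joinLast Γ₂ ∈ R := hR.preimage_joinLast.trans_mem j hΓ₁ hΓ fun f =>
      Prod.ext (by simp [Γ₁]) (by simpa [Γ₁] using hconst _ (update_false_ne_top f j))
    have hsplit (f : Fin m → Bool) : splitLast Γ₂ f =
        (((Γ (Fin.snoc f true)).1, (Γ (Fin.snoc f true)).1), Γ (Fin.snoc f true)) := by
      simp [splitLast, Γ₂, Γ₁, j, Fin.update_snoc_last]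
    have := ih hR.preimage_joinLast (Γ := splitLast Γ₂) (by simpa using hΓ₂) fun f hf => by
      rw [hsplit]
      exact Prod.ext rfl (hconst _ fun h => hf (snoc_eq_top_iff.1 h).1)
    rw [hsplit, snoc_top, update_top_true] at this
    rwa [comCube_succ]

theorem comCube_mem_of_const_off (hR : IsHEquivalence R) {Γ : Cube (Fin m) (X × X)}
    (hΓ : joinLast Γ ∈ R) (g : Fin m → Bool) (hconst : ∀ f ≠ g, (Γ f).1 = (Γ f).2) :
    comCube (m + 1) (Γ g).1 (Γ g).2 ∈ R := by
  simpa using hR.comCube_mem_of_const_off_top (hR.preimage_joinLast.comp_reflection_mem hΓ g)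
    fun f hf => hconst _ fun h => hf (by simpa using congrArg (reflection g) h)

theorem comCube_mem_of_comCube_mem_off (hR : IsHEquivalence R) {Γ : Cube (Fin m) (X × X)}
    (hΓ : joinLast Γ ∈ R) (g : Fin m → Bool)
    (hcom : ∀ f ≠ g, comCube (m + 1) (Γ f).1 (Γ f).2 ∈ R) :
    comCube (m + 1) (Γ g).1 (Γ g).2 ∈ R := by
  have hdiag (T : Finset (Fin m → Bool)) (hT : g ∉ T) :
      joinLast (T.piecewise (fun f => ((Γ f).1, (Γ f).1)) Γ) ∈ R := by
    induction T using Finset.induction_on with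
    | empty => simpa using hΓ
    | insert f T hf ih =>
      have hfg : f ≠ g := fun h => hT (h ▸ Finset.mem_insert_self f T)
      have := hR.update_mem (ih fun h => hT (Finset.mem_insert_of_mem h)) (Fin.snoc f true)
        (d := (Γ f).1) (by simpa [Finset.piecewise_eq_of_notMem _ _ _ hf] using hcom f hfg)
      rwa [← joinLast_update, Finset.piecewise_eq_of_notMem _ _ _ hf, ← Finset.piecewise_insert]
        at this
  simpa using hR.comCube_mem_of_const_off (hdiag _ (Finset.notMem_erase g Finset.univ)) g
    fun f hf => by simp [hf]

theorem comCube_mem_of_iSupported_last (hR : IsHEquivalence R) {γ : Cube (Fin (m + 1)) X}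
    (hγ : γ ∈ R) {x y : X} (h : iSupported (Fin.last m) γ x y) : comCube (m + 1) x y ∈ R := by
  obtain ⟨hx, hy, hconst⟩ := iSupported_iff.1 h
  have hsplit (f : Fin m → Bool) : splitLast γ f =
      (γ (update (Fin.snoc f true) (Fin.last m) false),
        γ (update (Fin.snoc f true) (Fin.last m) true)) := by
    simp [splitLast, Fin.update_snoc_last]
  have := hR.comCube_mem_of_const_off_top (Γ := splitLast γ) (by simpa using hγ) fun f hf => by
    rw [hsplit]
    exact hconst _ (by simpa [Fin.update_snoc_last, snoc_eq_top_iff] using hf)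
  rwa [hsplit, snoc_top, update_idem, update_idem, update_top_true, hx, hy] at this

theorem comCube_mem_of_iSupported (hR : IsHEquivalence R) {i : Fin (m + 1)}
    {γ : Cube (Fin (m + 1)) X} (hγ : γ ∈ R) {x y : X} (h : iSupported i γ x y) :
    comCube (m + 1) x y ∈ R := by
  set π := Equiv.swap i (Fin.last m)
  have := (hR.preimage_reindex π.symm).comCube_mem_of_iSupported_last (γ := reindex π γ)
    (by simpa [reindex_symm_reindex] using hγ) (by simpa [π] using iSupported_reindex h π)
  rwa [Set.mem_preimage, reindex_comCube] at this

theorem comCube_mem_iff_exists_iSupported (hR : IsHEquivalence R) {x y : X} :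
    comCube (m + 1) x y ∈ R ↔
      ∃ (i : Fin (m + 1)) (γ : Cube (Fin (m + 1)) X), γ ∈ R ∧ iSupported i γ x y := by
  refine ⟨fun h => ⟨0, _, h, iSupported_iff.2 ⟨?_, comCube_top _ _ _, fun f _ => ?_⟩⟩,
    fun ⟨_, _, hγ, h⟩ => hR.comCube_mem_of_iSupported hγ h⟩
  · exact comCube_of_ne_top _ _ (update_false_ne_top _ 0)
  · rw [comCube_of_ne_top _ _ (update_false_ne_top f 0), comCube_of_ne_top]
    assumption

end IsHEquivalence

theorem card_subtype_eq_card_sub_one_iff {α : Type*} [Finite α] [Nonempty α] {P : α → Prop} :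
    Nat.card {a // P a} = Nat.card α - 1 ↔ ∃ g, ∀ a, P a ↔ a ≠ g := by
  classical
  have := Fintype.ofFinite α
  simp only [Nat.card_eq_fintype_card]
  have hcompl := Fintype.card_subtype_compl P
  have hle := Fintype.card_subtype_le P
  have hpos : 0 < Fintype.card α := Fintype.card_pos
  rw [show Fintype.card {a // P a} = Fintype.card α - 1 ↔ Fintype.card {a // ¬P a} = 1 by omega,
    Fintype.card_eq_one_iff]
  constructor
  · rintro ⟨⟨g, hg⟩, h⟩
    exact ⟨g, fun a => ⟨fun ha hag => hag ▸ hg <| ha, fun hag => by_contra fun ha =>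
      hag (congrArg Subtype.val (h ⟨a, ha⟩))⟩⟩
  · rintro ⟨g, hg⟩
    exact ⟨⟨g, fun h => (hg g).1 h rfl⟩, fun ⟨a, ha⟩ => Subtype.ext (not_not.1 (mt (hg a).2 ha))⟩

section Centrality

variable {X : Type*} {m : ℕ}

theorem face_last_comp_symm (b : Bool) (γ : Cube (Fin (m + 1)) X) (f : Fin m → Bool) :
    face (Fin.last m) b γ (f ∘ (finSuccAboveEquiv (Fin.last m)).symm) = γ (Fin.snoc f b) := by
  simp only [face]
  congr 1
  funext j
  induction j using Fin.lastCases with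
  | last => simp
  | cast k => simp [(Fin.castSucc_lt_last k).ne, finSuccAboveEquiv_symm_apply_last]

theorem centrality_last_iff {δ : Set (X × X)} {R : Set (Cube (Fin (m + 1)) X)} :
    Centrality δ (Fin.last m) R ↔
      ∀ γ ∈ R, ∀ g, (∀ f ≠ g, splitLast γ f ∈ δ) → splitLast γ g ∈ δ := by
  have hcard (γ : Cube (Fin (m + 1)) X) :
      Nat.card {h : {x // x ≠ Fin.last m} → Bool // (face _ false γ h, face _ true γ h) ∈ δ} =
        Nat.card {f // splitLast γ f ∈ δ} :=
    (Nat.card_congr (((finSuccAboveEquiv (Fin.last m)).arrowCongr (Equiv.refl Bool)).subtypeEquiv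
      fun f => by simp [Equiv.arrowCongr, face_last_comp_symm, splitLast])).symm
  have hN : 2 ^ (Fintype.card (Fin (m + 1)) - 1) - 1 = Nat.card (Fin m → Bool) - 1 := by simp
  simp only [Centrality, hcard, hN, card_subtype_eq_card_sub_one_iff, not_exists, not_and]
  refine forall₂_congr fun γ _ => ⟨fun h g hg => by_contra fun hQ => ?_, fun h g hg => ?_⟩
  · exact h g fun f => ⟨fun hf hfg => hQ (hfg ▸ hf), hg f⟩
  · exact (hg g).1 (h g fun f hf => (hg f).2 hf) rfl

end Centrality

section ComRel

variable {A : Type*} {σ : Signature} [Alg σ A] {m : ℕ}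

def comRel (σ : Signature) [Alg σ A] (n : ℕ) (θ : Fin n → Set (A × A)) : Set (A × A) :=
  {p | comCube n p.1 p.2 ∈ DeltaRel σ θ}

theorem isCongruence_comRel {θ : Fin (m + 1) → Set (A × A)} (hθ : ∀ i, IsCongruence σ (θ i)) :
    IsCongruence σ (comRel σ (m + 1) θ) := by
  refine ⟨fun a => ?_, fun a b => isHEquivalence_DeltaRel.comCube_symm,
    fun a b c => isHEquivalence_DeltaRel.comCube_trans, fun o x y h => ?_⟩
  · have : cubeAt (0 : Fin (m + 1)) (a, a) = comCube (m + 1) a a := by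
      rw [comCube_self]; funext f; exact Bool.cond_self _ _
    exact (this ▸ cubeAt_mem_DeltaRel ((hθ 0).1 a) : comCube (m + 1) a a ∈ DeltaRel σ θ)
  · have : comCube (m + 1) (Alg.interp o x) (Alg.interp o y) =
        fun f => Alg.interp o fun k => comCube (m + 1) (x k) (y k) f := by
      funext f
      by_cases hf : f = ⊤ <;> simp [comCube_apply, hf]
    show comCube _ _ _ ∈ DeltaRel σ θ
    rw [this]
    exact compatCube_DeltaRel o _ h

theorem centrality_comRel (θ : Fin (m + 1) → Set (A × A)) :
    Centrality (comRel σ (m + 1) θ) (Fin.last m) (DeltaRel σ θ) :=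
  centrality_last_iff.2 fun _ hγ g =>
    isHEquivalence_DeltaRel.comCube_mem_of_comCube_mem_off (by simpa using hγ) g

theorem hComm_eq_comRel {θ : Fin (m + 1) → Set (A × A)} (hθ : ∀ i, IsCongruence σ (θ i)) :
    hComm σ (m + 1) θ = comRel σ (m + 1) θ := by
  refine subset_antisymm (Set.sInter_subset_of_mem ⟨isCongruence_comRel hθ, centrality_comRel θ⟩)
    fun p hp => Set.mem_sInter.2 fun δ ⟨hδ, hcent⟩ => ?_
  have := centrality_last_iff.1 hcent _ hp ⊤ fun f hf => by
    simpa [splitLast, comCube_apply, snoc_eq_top_iff, hf] using hδ.1 p.1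
  simpa [splitLast, comCube_apply, snoc_eq_top_iff] using this

theorem comCube_mem_DeltaRel_comp {n : ℕ} {θ : Fin n → Set (A × A)} {x y : A}
    (h : comCube n x y ∈ DeltaRel σ θ) (π : Equiv.Perm (Fin n)) :
    comCube n x y ∈ DeltaRel σ (θ ∘ π) := by
  simpa [reindex_comCube] using DeltaRel_subset_preimage_reindex θ π.symm h

end ComRel

end HyperCommutator

open HyperCommutator

theorem stmt17_general {A : Type u} (σ : Signature) [Alg σ A] (n : ℕ) [NeZero n]
    (θ : Fin n → Set (A × A)) (hθ : ∀ i, IsCongruence σ (θ i)) :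
    (∀ x y : A,
      ((x, y) ∈ hComm σ n θ ↔ comCube n x y ∈ DeltaRel σ θ) ∧
      ((x, y) ∈ hComm σ n θ ↔
        ∃ (i : Fin n) (γ : Cube (Fin n) A), γ ∈ DeltaRel σ θ ∧ iSupported i γ x y)) ∧
    (∀ π : Equiv.Perm (Fin n), hComm σ n θ = hComm σ n (θ ∘ π)) := by
  obtain ⟨m, rfl⟩ : ∃ m, n = m + 1 := Nat.exists_eq_succ_of_ne_zero (NeZero.ne n)
  refine ⟨fun x y => ?_, fun π => ?_⟩
  · rw [hComm_eq_comRel hθ]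
    exact ⟨Iff.rfl, isHEquivalence_DeltaRel.comCube_mem_iff_exists_iSupported⟩
  · rw [hComm_eq_comRel hθ, hComm_eq_comRel (θ := θ ∘ π) fun i => hθ (π i)]
    ext ⟨x, y⟩
    show comCube _ x y ∈ DeltaRel σ θ ↔ comCube _ x y ∈ DeltaRel σ (θ ∘ π)
    refine ⟨fun h => comCube_mem_DeltaRel_comp h π, fun h => ?_⟩
    simpa [Function.comp_assoc] using comCube_mem_DeltaRel_comp (θ := θ ∘ π) h π.symm

/-- relational characterization of the `n`-ary hypercommutator via
commutator cubes and `(i)`-support, and its symmetry under permutations. -/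
theorem stmt17 {A : Type u} (σ : Signature) [Alg σ A] (n : ℕ) [NeZero n]
    (hn : 2 ≤ n) (θ : Fin n → Set (A × A)) (hθ : ∀ i, IsCongruence σ (θ i)) :
    (∀ x y : A,
      ((x, y) ∈ hComm σ n θ ↔ comCube n x y ∈ DeltaRel σ θ) ∧
      ((x, y) ∈ hComm σ n θ ↔
        ∃ (i : Fin n) (γ : Cube (Fin n) A), γ ∈ DeltaRel σ θ ∧ iSupported i γ x y)) ∧
    (∀ π : Equiv.Perm (Fin n), hComm σ n θ = hComm σ n (θ ∘ π)) :=
  stmt17_general σ n θ hθ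
end
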